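/- Let G be an abelian group and A, A' finite multisets with elements in G. If FS(A) equals the multiset obtained from FS(A') by adding some fixed g ∈ G to each element, then there exists a finite multiset A'' with elements in G such that A'' ∼ A' and FS(A) = FS(A''). -/
import Mathlib


/-- The subset sums multiset: the multiset of sums of all sub-multisets of `A`. -/
def FS {G : Type*} [AddCommGroup G] (A : Multiset G) : Multiset G :=
  A.powerset.map Multiset.sum

/-- `A ∼ A'`: `A'` is obtained from `A` by flipping the signs of a sub-multiset. -/
def Sim {G : Type*} [AddCommGroup G] [DecidableEq G] (A A' : Multiset G) : Prop :=
  ∃ B ≤ A, A' = (A - B) + B.map (fun x => -x)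

lemma FS_zero {G : Type*} [AddCommGroup G] : FS (0 : Multiset G) = {0} := rfl

lemma FS_cons {G : Type*} [AddCommGroup G] (a : G) (A : Multiset G) :
    FS (a ::ₘ A) = FS A + (FS A).map (fun s => a + s) := by
  simp [FS, Multiset.powerset_cons, Multiset.map_map, Function.comp]

lemma FS_add {G : Type*} [AddCommGroup G] (C D : Multiset G) :
    FS (C + D) = (FS C).bind (fun c => (FS D).map (fun d => c + d)) := by
  induction D using Multiset.induction with
  | empty =>
      simp only [add_zero, FS_zero, Multiset.map_singleton, add_zero]
      exact ((Multiset.bind_singleton (FS C) id).trans (Multiset.map_id _)).symm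
  | cons a D ih =>
      rw [Multiset.add_cons, FS_cons, ih, FS_cons]
      rw [Multiset.map_bind]
      rw [← Multiset.bind_add]
      congr 1
      funext c
      rw [Multiset.map_add, Multiset.map_map, Multiset.map_map]
      simp [Function.comp, add_left_comm]

lemma FS_reflect {G : Type*} [AddCommGroup G] (B : Multiset G) :
    (FS B).map (fun s => B.sum - s) = FS B := by
  induction B using Multiset.induction with
  | empty => simp [FS_zero]
  | cons a B ih =>
      rw [FS_cons, Multiset.map_add, Multiset.map_map, Multiset.sum_cons]
      have h1 : (FS B).map ((fun s => a + B.sum - s) ∘ fun s => a + s)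
          = (FS B).map (fun s => B.sum - s) := by
        congr 1; funext s; simp
      have h2 : (FS B).map (fun s => a + B.sum - s)
          = ((FS B).map (fun s => B.sum - s)).map (fun s => a + s) := by
        rw [Multiset.map_map]; congr 1; funext s; simp; abel
      rw [h1, ih, h2, ih, add_comm]

lemma FS_map_neg {G : Type*} [AddCommGroup G] (B : Multiset G) :
    FS (B.map (fun x => -x)) = (FS B).map (fun s => -s) := by
  induction B using Multiset.induction with
  | empty => simp [FS_zero]
  | cons a B ih =>
      rw [Multiset.map_cons, FS_cons, FS_cons, ih, Multiset.map_add,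
        Multiset.map_map, Multiset.map_map]
      congr 2
      funext s
      simp [neg_add, add_comm]

/-- If `FS A` is a translate of `FS A'`, then there is `A'' ∼ A'` with `FS A = FS A''`. -/
theorem exists_sim_of_FS_translate {G : Type*} [AddCommGroup G] [DecidableEq G]
    (A A' : Multiset G) (g : G) (h : FS A = (FS A').map (fun s => s + g)) :
    ∃ A'' : Multiset G, Sim A'' A' ∧ FS A = FS A'' := by
  -- 0 ∈ FS A, hence -g ∈ FS A'
  have h0 : (0 : G) ∈ FS A := by
    refine Multiset.mem_map.2 ⟨0, ?_, rfl⟩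
    simp [Multiset.mem_powerset]
  rw [h] at h0
  obtain ⟨s, hs, hsg⟩ := Multiset.mem_map.1 h0
  obtain ⟨B, hB, hBs⟩ := Multiset.mem_map.1 hs
  rw [Multiset.mem_powerset] at hB
  have hBsum : B.sum = -g := by rw [hBs]; exact eq_neg_of_add_eq_zero_left hsg
  -- the flipped multiset
  set A'' : Multiset G := (A' - B) + B.map (fun x => -x) with hA''
  refine ⟨A'', ⟨B.map (fun x => -x), le_add_self.trans_eq rfl, ?_⟩, ?_⟩
  · rw [hA'', add_tsub_cancel_right, Multiset.map_map]
    simp only [Function.comp, neg_neg, Multiset.map_id']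
    rw [tsub_add_cancel_of_le hB]
  · have key : FS A'' = (FS A').map (fun s => s + g) := by
      rw [hA'', FS_add, FS_map_neg]
      have : (FS B).map (fun s => -s) = (FS B).map (fun s => s - B.sum) := by
        conv_lhs => rw [← FS_reflect B]
        rw [Multiset.map_map]
        congr 1; funext s; simp
      rw [this]
      have : ∀ c : G, ((FS B).map (fun s => s - B.sum)).map (fun d => c + d)
          = ((FS B).map (fun d => c + d)).map (fun s => s - B.sum) := by
        intro c
        rw [Multiset.map_map, Multiset.map_map]
        congr 1; funext s; simp; abel
      simp only [this]
      rw [← Multiset.map_bind, ← FS_add, tsub_add_cancel_of_le hB, hBsum]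
      congr 1; funext s; abel
    rw [key, ← h]
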